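/- arXiv:quant-ph/0309104 — 6 statements merged into one kernel-verified Lean document; each statement's English description precedes it below -/
import Mathlib

section
/- Let n be even, N = 2^n, and v ∈ SU(N). Then vᵀ S v = S (equivalently, (vφ)ᵀ S (vψ) = φᵀ S ψ for all φ, ψ ∈ ℂ^N, i.e. v preserves the concurrence bilinear form) if and only if all entries of the matrix E₀† v E₀ are real; in that case E₀† v E₀ is a real special orthogonal matrix, an element of SO(N). Thus conjugation by the standard entangler identifies the symmetry group of the concurrence form inside SU(N) with SO(N). -/
open Matrix Complex

noncomputable section

/-- Number of ones in the binary expansion of `j`. -/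
def popCnt (j : ℕ) : ℕ := (Nat.digits 2 j).sum

/-- The `N × N` matrix `S = (-iσ^y) ⊗ ⋯ ⊗ (-iσ^y)` (`n` factors), `N = 2^n`;
equivalently `S |j⟩ = (-1)^{#j} |N-1-j⟩`. -/
def Smat (n : ℕ) : Matrix (Fin (2 ^ n)) (Fin (2 ^ n)) ℂ :=
  fun k j => if (k : ℕ) + (j : ℕ) = 2 ^ n - 1 then (-1 : ℂ) ^ popCnt (j : ℕ) else 0

/-- The standard entangler `E₀` (for `n` even):
`E₀ = (1/√2) Σ_{j<N/2} ( |j⟩⟨2j| + i|j⟩⟨2j+1| + (-1)^{#j}(|N-j-1⟩⟨2j| - i|N-j-1⟩⟨2j+1|) )`. -/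
def E0 (n : ℕ) : Matrix (Fin (2 ^ n)) (Fin (2 ^ n)) ℂ :=
  fun r c =>
    (Real.sqrt 2 : ℂ)⁻¹ *
      (if (r : ℕ) < 2 ^ n / 2 then
        (if (c : ℕ) = 2 * (r : ℕ) then 1
         else if (c : ℕ) = 2 * (r : ℕ) + 1 then Complex.I else 0)
      else
        (if (c : ℕ) = 2 * (2 ^ n - 1 - (r : ℕ)) then
            (-1 : ℂ) ^ popCnt (2 ^ n - 1 - (r : ℕ))
         else if (c : ℕ) = 2 * (2 ^ n - 1 - (r : ℕ)) + 1 then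
            -Complex.I * (-1 : ℂ) ^ popCnt (2 ^ n - 1 - (r : ℕ))
         else 0))

/-- `Σ = Σ_{j<N/2} ( |j⟩⟨N/2+j| - |N/2+j⟩⟨j| )`. -/
def SigmaMat (n : ℕ) : Matrix (Fin (2 ^ n)) (Fin (2 ^ n)) ℂ :=
  fun r c =>
    if (c : ℕ) = (r : ℕ) + 2 ^ n / 2 then 1
    else if (r : ℕ) = (c : ℕ) + 2 ^ n / 2 then -1 else 0

/-- The standard finagler `F₀` (for `n` odd):
`F₀ = (1/√2) Σ_{j<N/2} ( |j⟩⟨j| + |N-j-1⟩⟨j| + (-1)^{#j}(|j⟩⟨N/2+j| - |N-j-1⟩⟨N/2+j|) )`. -/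
def F0 (n : ℕ) : Matrix (Fin (2 ^ n)) (Fin (2 ^ n)) ℂ :=
  fun r c =>
    (Real.sqrt 2 : ℂ)⁻¹ *
      (if (r : ℕ) < 2 ^ n / 2 then
        (if (c : ℕ) = (r : ℕ) then 1
         else if (c : ℕ) = (r : ℕ) + 2 ^ n / 2 then (-1 : ℂ) ^ popCnt (r : ℕ) else 0)
      else
        (if (c : ℕ) = 2 ^ n - 1 - (r : ℕ) then 1
         else if (c : ℕ) = (2 ^ n - 1 - (r : ℕ)) + 2 ^ n / 2 then
            -(-1 : ℂ) ^ popCnt (2 ^ n - 1 - (r : ℕ))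
         else 0))

/-- The concurrence capacity `κ(v) = sup { |(vψ)ᵀ S (vψ)| : ‖ψ‖ = 1, ψᵀSψ = 0 }`. -/
def kappa (n : ℕ) (v : Matrix (Fin (2 ^ n)) (Fin (2 ^ n)) ℂ) : ℝ :=
  sSup { r : ℝ | ∃ ψ : Fin (2 ^ n) → ℂ,
    star ψ ⬝ᵥ ψ = 1 ∧ ψ ⬝ᵥ ((Smat n) *ᵥ ψ) = 0 ∧
    r = ‖(v *ᵥ ψ) ⬝ᵥ ((Smat n) *ᵥ (v *ᵥ ψ))‖ }

/-! Conjugation by the entangler turns the concurrence form into the standard real one: `E₀` is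
unitary and `E₀ E₀ᵀ = S` (the signs `(-1) ^ #j` and `(-1) ^ #(N - 1 - j)` agree because `n` is
even), and `S` is Hermitian. For `w = E₀† v E₀` this gives `wᵀ w = E₀ᵀ (vᵀ S v) E₀` and
`E₀ᵀ S E₀ = 1`, so `vᵀ S v = S` iff `wᵀ w = 1`. As `w` is unitary, `wᵀ w = 1` iff `wᵀ = w†`, i.e.
iff `w` is real; and `det w = det v = 1`. -/

lemma popCnt_eq_mod_add_popCnt_div (s : ℕ) : popCnt s = s % 2 + popCnt (s / 2) := by
  rcases Nat.eq_zero_or_pos s with rfl | hs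
  · simp [popCnt]
  · rw [popCnt, Nat.digits_def' (by norm_num) hs, List.sum_cons, popCnt]

-- `2 ^ n - 1 - s` is `s` with its `n` low bits complemented.
lemma popCnt_compl_add_popCnt {n s : ℕ} (hs : s < 2 ^ n) :
    popCnt (2 ^ n - 1 - s) + popCnt s = n := by
  induction n generalizing s with
  | zero => simp [Nat.lt_one_iff.mp hs, popCnt]
  | succ n ih =>
    have := ih (s := s / 2) (by rw [pow_succ] at hs; omega)
    rw [popCnt_eq_mod_add_popCnt_div (2 ^ (n + 1) - 1 - s), popCnt_eq_mod_add_popCnt_div s,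
      show (2 ^ (n + 1) - 1 - s) / 2 = 2 ^ n - 1 - s / 2 by rw [pow_succ]; omega]
    rw [pow_succ] at hs ⊢
    omega

lemma neg_one_pow_popCnt_compl {R : Type*} [Monoid R] [HasDistribNeg R] {n s : ℕ}
    (hev : Even n) (hs : s < 2 ^ n) :
    (-1 : R) ^ popCnt (2 ^ n - 1 - s) = (-1) ^ popCnt s :=
  neg_one_pow_congr (Nat.even_add.mp ((popCnt_compl_add_popCnt hs).symm ▸ hev))

lemma neg_one_pow_mul_self {R : Type*} [Monoid R] [HasDistribNeg R] (k : ℕ) :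
    (-1 : R) ^ k * (-1) ^ k = 1 := by
  rw [← pow_add, Even.neg_one_pow ⟨k, rfl⟩]

section BilinearForm

variable {ι R : Type*} [Fintype ι] [CommRing R]

lemma forall_dotProduct_mulVec_eq_iff [DecidableEq ι] {A B : Matrix ι ι R} :
    (∀ x y : ι → R, x ⬝ᵥ A *ᵥ y = x ⬝ᵥ B *ᵥ y) ↔ A = B := by
  simp_rw [← toLinearMap₂'_apply']
  rw [← LinearMap.ext_iff₂, (toLinearMap₂' R).injective.eq_iff]

lemma mulVec_dotProduct_mulVec_mulVec (v S : Matrix ι ι R) (x y : ι → R) :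
    (v *ᵥ x) ⬝ᵥ S *ᵥ v *ᵥ y = x ⬝ᵥ (vᵀ * S * v) *ᵥ y := by
  rw [← vecMul_transpose, ← dotProduct_mulVec, mulVec_mulVec, mulVec_mulVec, Matrix.mul_assoc]

lemma forall_mulVec_dotProduct_mulVec_mulVec_iff [DecidableEq ι] (v S : Matrix ι ι R) :
    (∀ x y : ι → R, (v *ᵥ x) ⬝ᵥ S *ᵥ v *ᵥ y = x ⬝ᵥ S *ᵥ y) ↔ vᵀ * S * v = S := by
  simp_rw [mulVec_dotProduct_mulVec_mulVec]
  exact forall_dotProduct_mulVec_eq_iff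

end BilinearForm

section Unitary

variable {ι R : Type*} [Fintype ι] [DecidableEq ι] [CommRing R] [StarRing R]

lemma det_conjTranspose_mul_mul {E : Matrix ι ι R} (hE : E ∈ unitaryGroup ι R)
    (v : Matrix ι ι R) :
    (Eᴴ * v * E).det = v.det := by
  rw [det_mul, det_mul, mul_comm, ← mul_assoc, ← det_mul, ← star_eq_conjTranspose,
    mem_unitaryGroup_iff.mp hE, det_one, one_mul]

lemma transpose_mul_self_conjTranspose_mul_mul_eq_one_iff {E : Matrix ι ι R}
    (hE : E ∈ unitaryGroup ι R) (v : Matrix ι ι R) :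
    (Eᴴ * v * E)ᵀ * (Eᴴ * v * E) = 1 ↔ vᵀ * (E * Eᵀ)ᴴ * v = (E * Eᵀ)ᴴ := by
  have hEu : IsUnit E := Unitary.isUnit_coe (U := ⟨E, hE⟩)
  have hETu : IsUnit Eᵀ := Unitary.isUnit_coe (U := ⟨Eᵀ, transpose_mem_unitaryGroup_iff.mpr hE⟩)
  have hT : (E * Eᵀ)ᴴ = Eᴴᵀ * Eᴴ := by
    rw [conjTranspose_mul, conjTranspose_transpose_eq_transpose_conjTranspose]
  have hwTw : (Eᴴ * v * E)ᵀ * (Eᴴ * v * E) = Eᵀ * (vᵀ * (E * Eᵀ)ᴴ * v) * E := by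
    simp only [hT, transpose_mul, Matrix.mul_assoc]
  have hone : (1 : Matrix ι ι R) = Eᵀ * (E * Eᵀ)ᴴ * E := by
    rw [hT, ← Matrix.mul_assoc, ← transpose_mul, Matrix.mul_assoc, ← star_eq_conjTranspose,
      mem_unitaryGroup_iff'.mp hE, transpose_one, Matrix.one_mul]
  rw [hwTw, hone, Matrix.mul_assoc, Matrix.mul_assoc Eᵀ]
  exact ⟨fun h => hEu.mul_right_cancel (hETu.mul_left_cancel h), fun h => by rw [h]⟩

end Unitary

lemma transpose_mul_self_eq_one_iff_forall_im_eq_zero {ι : Type*} [Fintype ι] [DecidableEq ι]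
    {w : Matrix ι ι ℂ} (hw : w ∈ unitaryGroup ι ℂ) :
    wᵀ * w = 1 ↔ ∀ i j, (w i j).im = 0 := by
  have hwH : wᴴ * w = 1 := by rw [← star_eq_conjTranspose, ← mem_unitaryGroup_iff']; exact hw
  have hTH : wᵀ * w = 1 ↔ wᵀ = wᴴ := by
    refine ⟨fun h => ?_, fun h => h ▸ hwH⟩
    rw [← Matrix.mul_one wᵀ, ← mul_eq_one_comm.mp hwH, ← Matrix.mul_assoc, h, Matrix.one_mul]
  rw [hTH, ← conjTranspose_inj, conjTranspose_conjTranspose, ← Matrix.ext_iff]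
  simp only [conjTranspose_apply, transpose_apply, star_def, conj_eq_iff_im]

/-- Row `r` of `E₀` is supported on the columns `2j, 2j + 1` for `j = pairIndex n r` (the paper's
`j` for `r < N/2`, and `N - 1 - r` otherwise), where `√2 E₀` has entries `coeffEven n r` and
`coeffOdd n r`. -/
def pairIndex (n r : ℕ) : ℕ := if r < 2 ^ n / 2 then r else 2 ^ n - 1 - r

def coeffEven (n r : ℕ) : ℂ := if r < 2 ^ n / 2 then 1 else (-1) ^ popCnt (2 ^ n - 1 - r)

def coeffOdd (n r : ℕ) : ℂ :=
  if r < 2 ^ n / 2 then I else -I * (-1) ^ popCnt (2 ^ n - 1 - r)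

lemma star_coeffEven (n r : ℕ) : star (coeffEven n r) = coeffEven n r := by
  unfold coeffEven; split_ifs <;> simp

lemma star_coeffOdd (n r : ℕ) : star (coeffOdd n r) = -coeffOdd n r := by
  unfold coeffOdd; split_ifs <;> simp [Complex.conj_I]

lemma E0_apply (n : ℕ) (r c : Fin (2 ^ n)) :
    E0 n r c = (Real.sqrt 2 : ℂ)⁻¹ *
      (coeffEven n r * (if (c : ℕ) = 2 * pairIndex n r then 1 else 0) +
        coeffOdd n r * (if (c : ℕ) = 2 * pairIndex n r + 1 then 1 else 0)) := by
  simp only [E0, pairIndex, coeffEven, coeffOdd]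
  split_ifs <;> first | omega | ring

lemma sum_pair_mul_pair {N : ℕ} {a b : ℕ} (hb : 2 * b + 1 < N) (p q p' q' : ℂ) :
    ∑ c : Fin N, (p * (if (c : ℕ) = 2 * a then 1 else 0) +
        q * (if (c : ℕ) = 2 * a + 1 then 1 else 0)) *
      (p' * (if (c : ℕ) = 2 * b then 1 else 0) + q' * (if (c : ℕ) = 2 * b + 1 then 1 else 0)) =
      if a = b then p * p' + q * q' else 0 := by
  rw [Fin.sum_univ_eq_sum_range (fun c => (p * (if c = 2 * a then 1 else 0) +
      q * (if c = 2 * a + 1 then 1 else 0)) *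
    (p' * (if c = 2 * b then 1 else 0) + q' * (if c = 2 * b + 1 then 1 else 0)))]
  simp only [add_mul, mul_add, Finset.sum_add_distrib, mul_ite, ite_mul, mul_one, mul_zero,
    zero_mul, Finset.sum_ite_eq', Finset.mem_range, hb, (by omega : 2 * b < N), if_true,
    if_neg (by omega : ¬ 2 * b = 2 * a + 1), if_neg (by omega : ¬ 2 * b + 1 = 2 * a)]
  split_ifs <;> first | omega | ring

lemma two_mul_two_pow_div_two {n : ℕ} (hn : 1 ≤ n) : 2 * (2 ^ n / 2) = 2 ^ n :=
  Nat.mul_div_cancel' (dvd_pow_self 2 (by omega))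

lemma pairIndex_lt {n : ℕ} (hn : 1 ≤ n) (r : Fin (2 ^ n)) : 2 * pairIndex n r + 1 < 2 ^ n := by
  have hrN := r.is_lt
  have hN := two_mul_two_pow_div_two hn
  unfold pairIndex
  split_ifs <;> omega

lemma E0_mul_apply {n : ℕ} (hn : 1 ≤ n) (X : Matrix (Fin (2 ^ n)) (Fin (2 ^ n)) ℂ)
    (r s : Fin (2 ^ n)) (p q : ℂ)
    (hX : ∀ c : Fin (2 ^ n), X c s = (Real.sqrt 2 : ℂ)⁻¹ *
      (p * (if (c : ℕ) = 2 * pairIndex n s then 1 else 0) +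
        q * (if (c : ℕ) = 2 * pairIndex n s + 1 then 1 else 0))) :
    (E0 n * X) r s = 2⁻¹ *
      if pairIndex n r = pairIndex n s then coeffEven n r * p + coeffOdd n r * q else 0 := by
  have hsqrt : (Real.sqrt 2 : ℂ)⁻¹ * (Real.sqrt 2 : ℂ)⁻¹ = 2⁻¹ := by
    rw [← mul_inv, ← ofReal_mul, Real.mul_self_sqrt zero_le_two, ofReal_ofNat]
  simp_rw [mul_apply, E0_apply, hX]
  rw [← sum_pair_mul_pair (pairIndex_lt hn s), ← hsqrt, Finset.mul_sum]
  exact Finset.sum_congr rfl fun c _ => by ring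

lemma E0_mul_conjTranspose {n : ℕ} (hn : 1 ≤ n) : E0 n * (E0 n)ᴴ = 1 := by
  ext r s
  rw [E0_mul_apply hn _ r s (coeffEven n s) (-coeffOdd n s) fun c => by
    rw [conjTranspose_apply, E0_apply]
    simp [apply_ite (starRingEnd ℂ), ← star_def, star_coeffEven, star_coeffOdd]]
  simp only [one_apply, Fin.ext_iff]
  -- On the columns `2j, 2j + 1`, rows `j` and `N - 1 - j` of `√2 E₀` are `(1, i)` and `σ (1, -i)`
  -- with `σ = ±1`: orthogonal, both of squared norm `2`.
  have hrN := r.is_lt; have hsN := s.is_lt; have hN := two_mul_two_pow_div_two hn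
  by_cases hr : (r : ℕ) < 2 ^ n / 2 <;> by_cases hs : (s : ℕ) < 2 ^ n / 2 <;>
    simp only [pairIndex, coeffEven, coeffOdd, hr, hs, if_true, if_false] <;>
    split_ifs <;> first | omega | grind [I_mul_I, neg_one_pow_mul_self]

lemma E0_mul_transpose {n : ℕ} (hn : 1 ≤ n) (hev : Even n) : E0 n * (E0 n)ᵀ = Smat n := by
  ext r s
  rw [E0_mul_apply hn _ r s (coeffEven n s) (coeffOdd n s) fun c => by
    rw [transpose_apply, E0_apply], Smat]
  -- Now `(1, i) · (1, i) = 0`, `σ (1, -i) · σ (1, -i) = 0` and `(1, i) · σ (1, -i) = 2σ`, where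
  -- `σ = (-1) ^ #j` matches the sign `(-1) ^ #(N - 1 - j)` of `S` because `n` is even.
  have hrN := r.is_lt; have hsN := s.is_lt; have hN := two_mul_two_pow_div_two hn
  by_cases hr : (r : ℕ) < 2 ^ n / 2 <;> by_cases hs : (s : ℕ) < 2 ^ n / 2 <;>
    simp only [pairIndex, coeffEven, coeffOdd, hr, hs, if_true, if_false] <;>
    split_ifs <;> first | omega |
      grind [I_mul_I, neg_one_pow_mul_self, neg_one_pow_popCnt_compl (R := ℂ) hev s.2]

lemma Smat_isHermitian {n : ℕ} (hev : Even n) : (Smat n).IsHermitian := by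
  ext k j
  rw [conjTranspose_apply, Smat, Smat, add_comm (j : ℕ)]
  split_ifs with h
  · rw [star_pow, star_neg, star_one, show (k : ℕ) = 2 ^ n - 1 - j by omega,
      neg_one_pow_popCnt_compl hev j.2]
  · exact star_zero ℂ

lemma E0_mem_unitaryGroup {n : ℕ} (hn : 1 ≤ n) : E0 n ∈ unitaryGroup (Fin (2 ^ n)) ℂ := by
  rw [mem_unitaryGroup_iff, star_eq_conjTranspose]
  exact E0_mul_conjTranspose hn

/-- **`K ≅ SO(N)` for an even number of qubits.** For `n` even and `v ∈ SU(2^n)`: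
`vᵀ S v = S` iff `v` preserves the concurrence bilinear form, iff all entries of
`E₀† v E₀` are real; and in that case `E₀† v E₀` is a real special orthogonal matrix. -/
theorem K_is_SO (n : ℕ) (hn : 1 ≤ n) (hev : Even n)
    (v : Matrix (Fin (2 ^ n)) (Fin (2 ^ n)) ℂ)
    (hv : v ∈ Matrix.unitaryGroup (Fin (2 ^ n)) ℂ) (hvdet : v.det = 1) :
    ((vᵀ * Smat n * v = Smat n) ↔
        (∀ φ ψ : Fin (2 ^ n) → ℂ,
          (v *ᵥ φ) ⬝ᵥ ((Smat n) *ᵥ (v *ᵥ ψ)) = φ ⬝ᵥ ((Smat n) *ᵥ ψ))) ∧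
    ((vᵀ * Smat n * v = Smat n) ↔
        (∀ i j, (((E0 n)ᴴ * v * E0 n) i j).im = 0)) ∧
    (vᵀ * Smat n * v = Smat n →
        ((E0 n)ᴴ * v * E0 n)ᵀ * ((E0 n)ᴴ * v * E0 n) = 1 ∧
        ((E0 n)ᴴ * v * E0 n).det = 1) := by
  have hE := E0_mem_unitaryGroup hn
  have hw : (E0 n)ᴴ * v * E0 n ∈ unitaryGroup (Fin (2 ^ n)) ℂ :=
    mul_mem (mul_mem (Unitary.star_mem hE) hv) hE
  have hS : (E0 n * (E0 n)ᵀ)ᴴ = Smat n := by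
    rw [E0_mul_transpose hn hev, (Smat_isHermitian hev).eq]
  have horth : vᵀ * Smat n * v = Smat n ↔ ((E0 n)ᴴ * v * E0 n)ᵀ * ((E0 n)ᴴ * v * E0 n) = 1 := by
    rw [transpose_mul_self_conjTranspose_mul_mul_eq_one_iff hE, hS]
  refine ⟨(forall_mulVec_dotProduct_mulVec_mulVec_iff v (Smat n)).symm,
    horth.trans (transpose_mul_self_eq_one_iff_forall_im_eq_zero hw), fun h => ⟨horth.mp h, ?_⟩⟩
  rw [det_conjTranspose_mul_mul hE, hvdet]
end
end

section
/- Let n be odd and N = 2^n. There exists no unitary matrix E ∈ U(N) such that E · conj(E† X E) · E† = S⁻¹ X̄ S for every X ∈ su(N), where conj(·) and X̄ denote entrywise complex conjugation. That is, in an odd number of qubits there is no entangler intertwining the Cartan involution X ↦ X̄ with the involution θ(X) = S⁻¹ X̄ S. -/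
open Matrix Complex

noncomputable section

/-! Put `T = E Eᵀ`, a symmetric unitary matrix. Since `conj(E† X E) = Eᵀ X̄ Ē`, the
hypothesis says `T Y T† = S⁻¹ Y S` for every `Y ∈ su(N)`, so `S T` commutes with `su(N)` and
is a scalar `c`, i.e. `T = c S⁻¹`. For odd `n` the matrix `S` is antisymmetric, because
`#j + #(N-1-j) = n`; then `T = Tᵀ = -T` forces `T = 0`, which is not unitary. -/

lemma popCnt_add_two_mul {b : ℕ} (hb : b < 2) (k : ℕ) : popCnt (b + 2 * k) = b + popCnt k := by
  by_cases h : b = 0 ∧ k = 0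
  · obtain ⟨rfl, rfl⟩ := h
    rfl
  · rw [popCnt, Nat.digits_add 2 one_lt_two b k hb (not_and_or.mp h), List.sum_cons, popCnt]

lemma popCnt_add_popCnt_two_pow_sub_one_sub {n j : ℕ} (hj : j < 2 ^ n) :
    popCnt j + popCnt (2 ^ n - 1 - j) = n := by
  induction n generalizing j with
  | zero =>
    obtain rfl : j = 0 := by simpa using hj
    rfl
  | succ n ih =>
    have hpow : 2 ^ (n + 1) = 2 * 2 ^ n := pow_succ' 2 n
    have hq : j / 2 < 2 ^ n := by omega
    -- Complementing all `n + 1` bits flips the lowest bit and complements the `n` others.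
    have hj : j = j % 2 + 2 * (j / 2) := (Nat.mod_add_div j 2).symm
    have hc : 2 ^ (n + 1) - 1 - j = (1 - j % 2) + 2 * (2 ^ n - 1 - j / 2) := by omega
    rw [hc, popCnt_add_two_mul (by omega), hj, popCnt_add_two_mul (Nat.mod_lt j two_pos),
      ← hj]
    have := ih hq
    omega

lemma Smat_transpose_mul_self (n : ℕ) : (Smat n)ᵀ * Smat n = 1 := by
  ext j k
  rw [mul_apply, Finset.sum_eq_single ⟨2 ^ n - 1 - j, by omega⟩]
  · by_cases hjk : j = k
    · subst hjk
      simp [Smat, show (2 ^ n - 1 - (j : ℕ)) + j = 2 ^ n - 1 by omega, ← pow_add, ← two_mul]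
    · have : ¬ (2 ^ n - 1 - (j : ℕ)) + k = 2 ^ n - 1 := fun h => hjk (Fin.ext (by omega))
      simp [Smat, this, hjk]
  · intro l _ hl
    have : ¬ (l : ℕ) + j = 2 ^ n - 1 := fun h => hl (Fin.ext (by simp; omega))
    simp [Smat, this]
  · simp

lemma Smat_transpose (n : ℕ) : (Smat n)ᵀ = (-1 : ℂ) ^ n • Smat n := by
  ext j k
  simp only [transpose_apply, Matrix.smul_apply, smul_eq_mul, Smat]
  by_cases h : (k : ℕ) + j = 2 ^ n - 1
  · have hn : popCnt k + popCnt j = n := by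
      rw [show (j : ℕ) = 2 ^ n - 1 - k by omega]
      exact popCnt_add_popCnt_two_pow_sub_one_sub k.isLt
    have hsign : (-1 : ℂ) ^ n = (-1) ^ popCnt k * (-1) ^ popCnt j := by rw [← pow_add, hn]
    rw [if_pos h, if_pos (by omega), hsign, mul_right_comm, ← pow_add, ← two_mul, pow_mul]
    simp
  · rw [if_neg h, if_neg (by omega), mul_zero]

section Intertwiner

variable {ι : Type*}

lemma map_map_conj (X : Matrix ι ι ℂ) :
    (X.map (starRingEnd ℂ)).map (starRingEnd ℂ) = X := by
  ext; simp

lemma conjTranspose_map_conj {X : Matrix ι ι ℂ} (hX : Xᴴ = -X) :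
    (X.map (starRingEnd ℂ))ᴴ = -X.map (starRingEnd ℂ) := by
  rw [← conjTranspose_map (starRingEnd ℂ) (fun _ => rfl), hX, Matrix.map_neg _ (map_neg _)]

variable [Fintype ι]

lemma trace_map_conj (X : Matrix ι ι ℂ) :
    (X.map (starRingEnd ℂ)).trace = starRingEnd ℂ X.trace :=
  (AddMonoidHom.map_trace (starRingEnd ℂ) X).symm

lemma mul_map_conj_mul_conjTranspose (E X : Matrix ι ι ℂ) :
    E * (Eᴴ * X * E).map (starRingEnd ℂ) * Eᴴ =
      E * Eᵀ * X.map (starRingEnd ℂ) * (E * Eᵀ)ᴴ := by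
  have hconjT : Eᴴ.map (starRingEnd ℂ) = Eᵀ := by ext; simp
  have htransT : Eᵀᴴ = E.map (starRingEnd ℂ) := by ext; simp
  simp only [Matrix.map_mul, hconjT, conjTranspose_mul, htransT, Matrix.mul_assoc]

variable [DecidableEq ι]

theorem mem_range_scalar_of_commute_skewHermitian_traceless {M : Matrix ι ι ℂ}
    (hM : ∀ Y : Matrix ι ι ℂ, Yᴴ = -Y → Y.trace = 0 → Commute M Y) :
    M ∈ Set.range (scalar ι) := by
  refine mem_range_scalar_of_commute_single fun i j hij => ?_
  set A : Matrix ι ι ℂ := single i j 1 - single j i 1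
  set B : Matrix ι ι ℂ := I • (single i j 1 + single j i 1)
  have htr (c : ℂ) : (single i j c).trace = 0 ∧ (single j i c).trace = 0 :=
    ⟨trace_single_eq_of_ne i j c hij, trace_single_eq_of_ne j i c hij.symm⟩
  have hA : Commute M A := hM A (by simp [A]) (by simp [A, htr])
  have hB : Commute M B := hM B (by simp [B, ← single_neg, add_comm]) (by simp [B, htr])
  have hsingle : single i j 1 = (2 : ℂ)⁻¹ • (A - I • B) := by
    simp only [A, B, smul_smul, I_mul_I]
    module
  rw [hsingle]
  exact ((hA.sub_right (hB.smul_right I)).smul_right _).symm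

lemma exists_eq_smul_inv_of_conj_eq {T S : Matrix ι ι ℂ} (hT : T ∈ unitaryGroup ι ℂ)
    (hS : IsUnit S.det)
    (h : ∀ Y : Matrix ι ι ℂ, Yᴴ = -Y → Y.trace = 0 → T * Y * Tᴴ = S⁻¹ * Y * S) :
    ∃ c : ℂ, T = c • S⁻¹ := by
  have hTT : Tᴴ * T = 1 := mem_unitaryGroup_iff'.mp hT
  have hcomm (Y : Matrix ι ι ℂ) (hY : Yᴴ = -Y) (htr : Y.trace = 0) : Commute (S * T) Y :=
    calc S * T * Y = S * (T * Y * Tᴴ) * T := by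
          simp only [Matrix.mul_assoc, hTT, Matrix.mul_one]
      _ = Y * (S * T) := by
        rw [h Y hY htr, ← Matrix.mul_assoc, ← Matrix.mul_assoc, mul_nonsing_inv _ hS,
          Matrix.one_mul, Matrix.mul_assoc]
  obtain ⟨c, hc⟩ := mem_range_scalar_of_commute_skewHermitian_traceless hcomm
  refine ⟨c, ?_⟩
  calc T = S⁻¹ * (S * T) := by rw [← Matrix.mul_assoc, nonsing_inv_mul _ hS, Matrix.one_mul]
    _ = c • S⁻¹ := by
      rw [← hc, scalar_apply, ← smul_one_eq_diagonal, Matrix.mul_smul, Matrix.mul_one]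

theorem not_exists_unitary_intertwining_of_transpose_eq_neg [Nonempty ι] {S : Matrix ι ι ℂ}
    (hS : IsUnit S.det) (hSt : Sᵀ = -S) :
    ¬ ∃ E ∈ unitaryGroup ι ℂ, ∀ X : Matrix ι ι ℂ, Xᴴ = -X → X.trace = 0 →
        E * (Eᴴ * X * E).map (starRingEnd ℂ) * Eᴴ = S⁻¹ * X.map (starRingEnd ℂ) * S := by
  rintro ⟨E, hE, hX⟩
  set T := E * Eᵀ
  have hT : T ∈ unitaryGroup ι ℂ := mul_mem hE (transpose_mem_unitaryGroup_iff.mpr hE)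
  obtain ⟨c, hc⟩ := exists_eq_smul_inv_of_conj_eq hT hS fun Y hY htr => by
    have := hX (Y.map (starRingEnd ℂ)) (conjTranspose_map_conj hY)
      (by rw [trace_map_conj, htr, map_zero])
    rwa [mul_map_conj_mul_conjTranspose, map_map_conj] at this
  have hSinv : (S⁻¹)ᵀ = -S⁻¹ := by
    rw [transpose_nonsing_inv, hSt]
    exact inv_eq_left_inv (by rw [neg_mul_neg, nonsing_inv_mul _ hS])
  -- `T` is symmetric, but a multiple of the antisymmetric `S⁻¹`.
  have hT0 : T = 0 := by
    have hsymm : Tᵀ = T := by rw [transpose_mul, transpose_transpose]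
    rw [hc, transpose_smul, hSinv, smul_neg, ← hc] at hsymm
    have h2T : (2 : ℂ) • T = 0 := by
      rw [two_smul]
      nth_rewrite 1 [← hsymm]
      exact neg_add_cancel T
    exact (smul_eq_zero.mp h2T).resolve_left two_ne_zero
  have := mem_unitaryGroup_iff.mp hT
  rw [hT0, zero_mul] at this
  exact zero_ne_one this

end Intertwiner

theorem no_entangler_odd_general (n : ℕ) (hodd : Odd n) :
    ¬ ∃ E : Matrix (Fin (2 ^ n)) (Fin (2 ^ n)) ℂ,
      E ∈ Matrix.unitaryGroup (Fin (2 ^ n)) ℂ ∧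
      ∀ X : Matrix (Fin (2 ^ n)) (Fin (2 ^ n)) ℂ, Xᴴ = -X → X.trace = 0 →
        E * ((Eᴴ * X * E).map (starRingEnd ℂ)) * Eᴴ =
          (Smat n)⁻¹ * (X.map (starRingEnd ℂ)) * Smat n := by
  have : Nonempty (Fin (2 ^ n)) := ⟨⟨0, Nat.two_pow_pos n⟩⟩
  refine not_exists_unitary_intertwining_of_transpose_eq_neg
    (isUnit_det_of_left_inverse (Smat_transpose_mul_self n)) ?_
  rw [Smat_transpose, hodd.neg_one_pow, neg_one_smul]

/-- **No entangler exists in an odd number of qubits:** for `n` odd there is no unitary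
`E ∈ U(2^n)` with `E ⋅ conj(E† X E) ⋅ E† = S⁻¹ X̄ S` for every `X ∈ su(2^n)`. -/
theorem no_entangler_odd (n : ℕ) (hn : 1 ≤ n) (hodd : Odd n) :
    ¬ ∃ E : Matrix (Fin (2 ^ n)) (Fin (2 ^ n)) ℂ,
      E ∈ Matrix.unitaryGroup (Fin (2 ^ n)) ℂ ∧
      ∀ X : Matrix (Fin (2 ^ n)) (Fin (2 ^ n)) ℂ, Xᴴ = -X → X.trace = 0 →
        E * ((Eᴴ * X * E).map (starRingEnd ℂ)) * Eᴴ =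
          (Smat n)⁻¹ * (X.map (starRingEnd ℂ)) * Smat n :=
  no_entangler_odd_general n hodd
end
end

section
/- The following matrices in su(N) pairwise commute, so that their real span 𝔞 is a commutative Lie subalgebra of su(N): H_j = i( |j⟩⟨j| + |N−j−1⟩⟨N−j−1| − |j+1⟩⟨j+1| − |N−j−2⟩⟨N−j−2| ) for 0 ≤ j ≤ N/2−2, and G_j = i( |j⟩⟨N−j−1| + |N−j−1⟩⟨j| ) for 0 ≤ j ≤ N/2−1. -/
open Matrix Complex

noncomputable section

/-- `H_j = i( |j⟩⟨j| + |N-j-1⟩⟨N-j-1| - |j+1⟩⟨j+1| - |N-j-2⟩⟨N-j-2| )`. -/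
def Hmat (n j : ℕ) : Matrix (Fin (2 ^ n)) (Fin (2 ^ n)) ℂ :=
  fun r c =>
    if (r : ℕ) = (c : ℕ) then
      (if (r : ℕ) = j ∨ (r : ℕ) = 2 ^ n - 1 - j then Complex.I
       else if (r : ℕ) = j + 1 ∨ (r : ℕ) = 2 ^ n - 2 - j then -Complex.I
       else 0)
    else 0

/-- `G_j = i( |j⟩⟨N-j-1| + |N-j-1⟩⟨j| )`. -/
def Gmat (n j : ℕ) : Matrix (Fin (2 ^ n)) (Fin (2 ^ n)) ℂ :=
  fun r c =>
    if ((r : ℕ) = j ∧ (c : ℕ) = 2 ^ n - 1 - j) ∨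
       ((r : ℕ) = 2 ^ n - 1 - j ∧ (c : ℕ) = j) then Complex.I
    else 0

/-- The generating set of `𝔞`: the `H_j` for `0 ≤ j ≤ N/2 - 2` and the `G_j` for
`0 ≤ j ≤ N/2 - 1`. -/
def aGens (n : ℕ) : Set (Matrix (Fin (2 ^ n)) (Fin (2 ^ n)) ℂ) :=
  { X | (∃ j : ℕ, j + 2 ≤ 2 ^ n / 2 ∧ X = Hmat n j) ∨
        (∃ j : ℕ, j + 1 ≤ 2 ^ n / 2 ∧ X = Gmat n j) }

/-- Diagonal entries of `H_j`, as a function of a natural-number index. -/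
def Hd (N j r : ℕ) : ℂ :=
  if r = j ∨ r = N - 1 - j then Complex.I
  else if r = j + 1 ∨ r = N - 2 - j then -Complex.I
  else 0

/-- `Hd` is invariant under the flip `a ↦ N - 1 - a`. -/
lemma Hd_flip (N j a : ℕ) (hN2 : 2 ≤ N) (hmod : N % 2 = 0) (hj : j + 2 ≤ N / 2)
    (ha : a < N) : Hd N j a = Hd N j (N - 1 - a) := by
  unfold Hd
  split_ifs <;> first | rfl | (exfalso; omega)

lemma disjoint_aux (N j k m : ℕ) (hmod : N % 2 = 0) (hj : j + 1 ≤ N / 2)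
    (hk : k + 1 ≤ N / 2) (hjk : j ≠ k) (h1 : m = j ∨ m = N - 1 - j)
    (h2 : m = k ∨ m = N - 1 - k) : False := by omega

lemma two_le_pow (n : ℕ) (hn : 1 ≤ n) : 2 ≤ 2 ^ n := by
  calc 2 = 2 ^ 1 := rfl
  _ ≤ 2 ^ n := Nat.pow_le_pow_right (by norm_num) hn

lemma pow_mod_two (n : ℕ) (hn : 1 ≤ n) : 2 ^ n % 2 = 0 := by
  rcases n with _ | m
  · omega
  · simp [pow_succ, Nat.mul_mod_left]

lemma Hmat_eq_diagonal (n j : ℕ) :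
    Hmat n j = Matrix.diagonal (fun r : Fin (2 ^ n) => Hd (2 ^ n) j (r : ℕ)) := by
  ext r c
  by_cases h : r = c
  · subst h
    simp [Hmat, Hd, Matrix.diagonal_apply_eq]
  · have h' : (r : ℕ) ≠ (c : ℕ) := fun hh => h (Fin.val_injective hh)
    simp [Hmat, Matrix.diagonal_apply_ne _ h, h']

lemma Hmat_skew (n j : ℕ) : (Hmat n j)ᴴ = -Hmat n j := by
  rw [Hmat_eq_diagonal, Matrix.diagonal_conjTranspose, Matrix.diagonal_neg]
  exact congrArg Matrix.diagonal (funext fun r => by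
    simp only [Pi.star_apply, Pi.neg_apply, Hd]
    split_ifs <;> simp)

lemma Hmat_trace (n j : ℕ) (hj : j + 2 ≤ 2 ^ n / 2) (hn : 1 ≤ n) :
    (Hmat n j).trace = 0 := by
  have hN2 : 2 ≤ 2 ^ n := two_le_pow n hn
  have hmod : 2 ^ n % 2 = 0 := pow_mod_two n hn
  rw [Hmat_eq_diagonal, Matrix.trace_diagonal]
  rw [Fin.sum_univ_eq_sum_range (fun r => Hd (2 ^ n) j r)]
  set N := 2 ^ n with hN
  have key : ∀ r, Hd N j r =
      (if r = j then Complex.I else 0) + (if r = N - 1 - j then Complex.I else 0)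
      + (if r = j + 1 then -Complex.I else 0) + (if r = N - 2 - j then -Complex.I else 0) := by
    intro r
    unfold Hd
    by_cases h1 : r = j <;> by_cases h2 : r = N - 1 - j <;> by_cases h3 : r = j + 1 <;>
      by_cases h4 : r = N - 2 - j <;> simp_all <;> omega
  simp only [key]
  rw [Finset.sum_add_distrib, Finset.sum_add_distrib, Finset.sum_add_distrib]
  rw [Finset.sum_ite_eq' (Finset.range N) j, Finset.sum_ite_eq' (Finset.range N) (N - 1 - j),
    Finset.sum_ite_eq' (Finset.range N) (j + 1), Finset.sum_ite_eq' (Finset.range N) (N - 2 - j)]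
  simp only [Finset.mem_range]
  rw [if_pos (by omega), if_pos (by omega), if_pos (by omega), if_pos (by omega)]
  ring

lemma Gmat_skew (n j : ℕ) : (Gmat n j)ᴴ = -Gmat n j := by
  ext r c
  simp only [Matrix.conjTranspose_apply, Matrix.neg_apply, Gmat]
  by_cases h : ((r : ℕ) = j ∧ (c : ℕ) = 2 ^ n - 1 - j) ∨
      ((r : ℕ) = 2 ^ n - 1 - j ∧ (c : ℕ) = j)
  · have h' : ((c : ℕ) = j ∧ (r : ℕ) = 2 ^ n - 1 - j) ∨
        ((c : ℕ) = 2 ^ n - 1 - j ∧ (r : ℕ) = j) := by tauto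
    rw [if_pos h, if_pos h']
    simp
  · have h' : ¬(((c : ℕ) = j ∧ (r : ℕ) = 2 ^ n - 1 - j) ∨
        ((c : ℕ) = 2 ^ n - 1 - j ∧ (r : ℕ) = j)) := by tauto
    rw [if_neg h, if_neg h']
    simp

lemma Gmat_trace (n j : ℕ) (hj : j + 1 ≤ 2 ^ n / 2) (hn : 1 ≤ n) :
    (Gmat n j).trace = 0 := by
  have hN2 : 2 ≤ 2 ^ n := two_le_pow n hn
  have hmod : 2 ^ n % 2 = 0 := pow_mod_two n hn
  rw [Matrix.trace]
  apply Finset.sum_eq_zero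
  intro r _
  simp only [Matrix.diag_apply, Gmat]
  rw [if_neg]
  rintro (⟨h1, h2⟩ | ⟨h1, h2⟩) <;> omega

lemma HH_comm (n j k : ℕ) : Hmat n j * Hmat n k = Hmat n k * Hmat n j := by
  rw [Hmat_eq_diagonal n j, Hmat_eq_diagonal n k, Matrix.diagonal_mul_diagonal,
    Matrix.diagonal_mul_diagonal]
  exact congrArg Matrix.diagonal (funext fun r => mul_comm _ _)

lemma HG_comm (n j k : ℕ) (hj : j + 2 ≤ 2 ^ n / 2) (hk : k + 1 ≤ 2 ^ n / 2) (hn : 1 ≤ n) :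
    Hmat n j * Gmat n k = Gmat n k * Hmat n j := by
  have hN2 : 2 ≤ 2 ^ n := two_le_pow n hn
  have hmod : 2 ^ n % 2 = 0 := pow_mod_two n hn
  rw [Hmat_eq_diagonal]
  ext r c
  rw [Matrix.diagonal_mul, Matrix.mul_diagonal]
  by_cases h : ((r : ℕ) = k ∧ (c : ℕ) = 2 ^ n - 1 - k) ∨
      ((r : ℕ) = 2 ^ n - 1 - k ∧ (c : ℕ) = k)
  · have hd : Hd (2 ^ n) j (r : ℕ) = Hd (2 ^ n) j (c : ℕ) := by
      rcases h with ⟨h1, h2⟩ | ⟨h1, h2⟩ <;> rw [h1, h2]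
      · exact Hd_flip (2 ^ n) j k hN2 hmod hj (by omega)
      · exact (Hd_flip (2 ^ n) j k hN2 hmod hj (by omega)).symm
    rw [hd]
    ring
  · have hG : Gmat n k r c = 0 := if_neg h
    rw [hG, mul_zero, zero_mul]

lemma GG_zero (n j k : ℕ) (hj : j + 1 ≤ 2 ^ n / 2) (hk : k + 1 ≤ 2 ^ n / 2) (hn : 1 ≤ n)
    (hjk : j ≠ k) : Gmat n j * Gmat n k = 0 := by
  have hN2 : 2 ≤ 2 ^ n := two_le_pow n hn
  have hmod : 2 ^ n % 2 = 0 := pow_mod_two n hn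
  ext r c
  rw [Matrix.mul_apply, Matrix.zero_apply]
  apply Finset.sum_eq_zero
  intro m _
  simp only [Gmat]
  by_cases h1 : ((r : ℕ) = j ∧ (m : ℕ) = 2 ^ n - 1 - j) ∨
      ((r : ℕ) = 2 ^ n - 1 - j ∧ (m : ℕ) = j)
  · by_cases h2 : ((m : ℕ) = k ∧ (c : ℕ) = 2 ^ n - 1 - k) ∨
        ((m : ℕ) = 2 ^ n - 1 - k ∧ (c : ℕ) = k)
    · exact (disjoint_aux (2 ^ n) j k (m : ℕ) hmod hj hk hjk
        (by tauto) (by tauto)).elim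
    · rw [if_neg h2, mul_zero]
  · rw [if_neg h1, zero_mul]

lemma GG_comm (n j k : ℕ) (hj : j + 1 ≤ 2 ^ n / 2) (hk : k + 1 ≤ 2 ^ n / 2) (hn : 1 ≤ n) :
    Gmat n j * Gmat n k = Gmat n k * Gmat n j := by
  by_cases hjk : j = k
  · subst hjk; rfl
  · rw [GG_zero n j k hj hk hn hjk, GG_zero n k j hk hj hn (Ne.symm hjk)]

/-- **`𝔞` is a commutative subalgebra of `su(N)`:** the matrices `H_j`
(`0 ≤ j ≤ N/2-2`) and `G_j` (`0 ≤ j ≤ N/2-1`) lie in `su(N)` and pairwise commute,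
so their real span is a commutative Lie subalgebra of `su(N)`. -/
theorem aAlgebra_commutative (n : ℕ) (hn : 1 ≤ n) :
    (∀ X ∈ aGens n, Xᴴ = -X ∧ X.trace = 0) ∧
    (∀ X ∈ aGens n, ∀ Y ∈ aGens n, X * Y = Y * X) ∧
    (∀ X ∈ Submodule.span ℝ (aGens n), ∀ Y ∈ Submodule.span ℝ (aGens n),
      X * Y - Y * X = 0) := by
  have comm : ∀ X ∈ aGens n, ∀ Y ∈ aGens n, X * Y = Y * X := by
    rintro X (⟨j, hj, rfl⟩ | ⟨j, hj, rfl⟩) Y (⟨k, hk, rfl⟩ | ⟨k, hk, rfl⟩)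
    · exact HH_comm n j k
    · exact HG_comm n j k hj hk hn
    · exact (HG_comm n k j hk hj hn).symm
    · exact GG_comm n j k hj hk hn
  refine ⟨?_, comm, ?_⟩
  · rintro X (⟨j, hj, rfl⟩ | ⟨j, hj, rfl⟩)
    · exact ⟨Hmat_skew n j, Hmat_trace n j hj hn⟩
    · exact ⟨Gmat_skew n j, Gmat_trace n j hj hn⟩
  · intro X hX Y hY
    have key : X * Y = Y * X := by
      induction hX using Submodule.span_induction with
      | mem Z hZ =>
        induction hY using Submodule.span_induction with
        | mem W hW => exact comm Z hZ W hW
        | zero => simp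
        | add a b _ _ ha hb => rw [mul_add, add_mul, ha, hb]
        | smul a x _ hx => rw [mul_smul_comm, smul_mul_assoc, hx]
      | zero => simp
      | add a b _ _ ha hb => rw [add_mul, mul_add, ha, hb]
      | smul a x _ hx => rw [smul_mul_assoc, mul_smul_comm, hx]
    rw [key, sub_self]
end
end

section
/- Let n be even, let k₁, k₂ ∈ SU(N) satisfy k₁ᵀ S k₁ = S and k₂ᵀ S k₂ = S, let d be a diagonal unitary N×N matrix with diagonal entries d₀, …, d_{N−1}, let a = E₀ d E₀†, and let v = k₁ a k₂. Then the matrix (E₀† v E₀)(E₀† v E₀)ᵀ is conjugate to d² by a real special orthogonal matrix; in particular its multiset of eigenvalues (the concurrence spectrum of v) is {d_j² : 0 ≤ j ≤ N−1}. -/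
open Matrix Complex

noncomputable section

/-!
`E₀` is unitary and `S E₀ = Ē₀`, i.e. `E₀ᵀ S E₀ = 1`: in the basis formed by the columns of `E₀`
the bilinear form `S` becomes the dot product. Hence every unitary `k` with `kᵀ S k = S` becomes
`O = E₀† k E₀`, which is both unitary and orthogonal, hence real. Writing `E₀† v E₀ = O₁ d O₂`,
the factor `O₂ O₂ᵀ = 1` cancels in `(O₁ d O₂)(O₁ d O₂)ᵀ`, leaving `O₁ d² O₁ᵀ`.
-/

section Orthogonal

variable {m : Type*} [Fintype m] [DecidableEq m]

theorem Matrix.im_eq_zero_of_mem_unitaryGroup_of_transpose_mul_self {O : Matrix m m ℂ}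
    (hO : O ∈ unitaryGroup m ℂ) (hOO : Oᵀ * O = 1) (i j : m) : (O i j).im = 0 := by
  have hstar : Oᴴ = Oᵀ := by
    rw [← inv_eq_left_inv hOO]
    exact (inv_eq_left_inv (mem_unitaryGroup_iff'.mp hO)).symm
  exact Complex.conj_eq_iff_im.mp (congrFun (congrFun hstar j) i)

theorem Matrix.mul_mul_transpose_of_mul_transpose_eq_one (A : Matrix m m ℂ) {O : Matrix m m ℂ}
    (hO : O * Oᵀ = 1) : A * O * (A * O)ᵀ = A * Aᵀ := by
  rw [transpose_mul, Matrix.mul_assoc, ← Matrix.mul_assoc O, hO, Matrix.one_mul]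

theorem Matrix.transpose_mul_self_conjTranspose_mul_mul_eq_one {E S : Matrix m m ℂ}
    (hE : Eᴴ * E = 1) (hSE : S * E = Eᴴᵀ) {k : Matrix m m ℂ} (hk : kᵀ * S * k = S) :
    (Eᴴ * k * E)ᵀ * (Eᴴ * k * E) = 1 := by
  have hS : Eᴴᵀ * Eᴴ = S := by
    rw [← hSE, Matrix.mul_assoc, mul_eq_one_comm.mp hE, Matrix.mul_one]
  calc (Eᴴ * k * E)ᵀ * (Eᴴ * k * E) = Eᵀ * (kᵀ * (Eᴴᵀ * Eᴴ) * k) * E := by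
        simp only [transpose_mul, Matrix.mul_assoc]
    _ = Eᵀ * (S * E) := by rw [hS, hk, Matrix.mul_assoc]
    _ = 1 := by rw [hSE, ← transpose_mul, hE, transpose_one]

end Orthogonal

lemma popCnt_eq_mod_add_div (m : ℕ) : popCnt m = m % 2 + popCnt (m / 2) := by
  rcases m with _ | m
  · simp [popCnt]
  · rw [popCnt, popCnt, Nat.digits_def' (by norm_num : 1 < 2) (Nat.succ_pos m)]
    simp

lemma popCnt_add_popCnt_sub {n j : ℕ} (h : j < 2 ^ n) :
    popCnt j + popCnt (2 ^ n - 1 - j) = n := by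
  induction n generalizing j with
  | zero => simp [Nat.lt_one_iff.mp h, popCnt]
  | succ n ih =>
    rw [pow_succ] at h ⊢
    have hhalf := ih (j := j / 2) (by omega)
    have hdiv : (2 ^ n * 2 - 1 - j) / 2 = 2 ^ n - 1 - j / 2 := by omega
    rw [popCnt_eq_mod_add_div j, popCnt_eq_mod_add_div (2 ^ n * 2 - 1 - j), hdiv]
    omega

lemma neg_one_pow_popCnt_rev_mul {n : ℕ} (hev : Even n) (r : Fin (2 ^ n)) :
    (-1 : ℂ) ^ popCnt r.rev * (-1) ^ popCnt r = 1 := by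
  have hsum := popCnt_add_popCnt_sub r.isLt
  rw [show 2 ^ n - 1 - (r : ℕ) = r.rev by rw [Fin.val_rev]; omega] at hsum
  rw [← pow_add, add_comm, hsum, hev.neg_one_pow]

lemma Smat_mul_apply {n : ℕ} (A : Matrix (Fin (2 ^ n)) (Fin (2 ^ n)) ℂ) (r c : Fin (2 ^ n)) :
    (Smat n * A) r c = (-1) ^ popCnt r.rev * A r.rev c := by
  have hSmat : ∀ j, Smat n r j = if j = r.rev then (-1) ^ popCnt r.rev else 0 := by
    intro j
    have hrev : (r : ℕ) + j = 2 ^ n - 1 ↔ j = r.rev := by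
      rw [Fin.ext_iff, Fin.val_rev]; omega
    simp only [Smat, hrev]
    split_ifs with h
    · rw [h]
    · rfl
  simp only [mul_apply, hSmat, ite_mul, zero_mul, Finset.sum_ite_eq', Finset.mem_univ, if_true]

def entanglerRow (n j : ℕ) (c : Fin (2 ^ n)) : ℂ :=
  (Real.sqrt 2 : ℂ)⁻¹ *
    (if (c : ℕ) = 2 * j then 1 else if (c : ℕ) = 2 * j + 1 then I else 0)

lemma sum_entanglerRow_mul {n j : ℕ} (hj : j < 2 ^ n / 2) (f : Fin (2 ^ n) → ℂ) :
    ∑ c, entanglerRow n j c * f c =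
      (Real.sqrt 2 : ℂ)⁻¹ * (f ⟨2 * j, by omega⟩ + I * f ⟨2 * j + 1, by omega⟩) := by
  rw [Fintype.sum_eq_add ⟨2 * j, by omega⟩ ⟨2 * j + 1, by omega⟩ (by simp [Fin.ext_iff])]
  · simp only [entanglerRow, ↓reduceIte, mul_one, Nat.add_eq_left, one_ne_zero]
    ring
  · rintro c ⟨h₀, h₁⟩
    simp [entanglerRow, Fin.val_ne_iff.mpr h₀, Fin.val_ne_iff.mpr h₁]

lemma inv_sqrt_two_mul_self : (Real.sqrt 2 : ℂ)⁻¹ * (Real.sqrt 2 : ℂ)⁻¹ = 2⁻¹ := by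
  rw [← mul_inv, ← Complex.ofReal_mul, Real.mul_self_sqrt zero_le_two, Complex.ofReal_ofNat]

lemma entanglerRow_dotProduct_star {n j : ℕ} (hj : j < 2 ^ n / 2) (j' : ℕ) :
    entanglerRow n j ⬝ᵥ star (entanglerRow n j') = if j = j' then 1 else 0 := by
  rw [dotProduct, sum_entanglerRow_mul hj]
  by_cases h : j = j'
  · subst h
    simp only [Pi.star_apply, entanglerRow, ↓reduceIte, mul_one, star_inv₀, RCLike.star_def,
      conj_ofReal, Nat.add_eq_left, one_ne_zero, star_mul', conj_I, mul_neg]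
    linear_combination (1 - I ^ 2) * inv_sqrt_two_mul_self - (1 / 2 : ℂ) * I_sq
  · simp [entanglerRow, h, show 2 * j ≠ 2 * j' + 1 by omega, show 2 * j + 1 ≠ 2 * j' by omega]

lemma entanglerRow_dotProduct {n j : ℕ} (hj : j < 2 ^ n / 2) (j' : ℕ) :
    entanglerRow n j ⬝ᵥ entanglerRow n j' = 0 := by
  rw [dotProduct, sum_entanglerRow_mul hj]
  by_cases h : j = j'
  · subst h
    simp only [entanglerRow, ↓reduceIte, mul_one, Nat.add_eq_left, one_ne_zero]
    linear_combination (Real.sqrt 2 : ℂ)⁻¹ ^ 2 * I_sq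
  · simp [entanglerRow, h, show 2 * j ≠ 2 * j' + 1 by omega, show 2 * j + 1 ≠ 2 * j' by omega]

lemma E0_row_of_lt {n : ℕ} {r : Fin (2 ^ n)} (hr : (r : ℕ) < 2 ^ n / 2) :
    E0 n r = entanglerRow n r := by
  funext c
  simp only [E0, entanglerRow, if_pos hr]

lemma E0_row_of_le {n : ℕ} {r : Fin (2 ^ n)} (hr : 2 ^ n / 2 ≤ (r : ℕ)) :
    E0 n r = (-1 : ℂ) ^ popCnt r.rev • star (entanglerRow n r.rev) := by
  funext c
  have hrev : (r.rev : ℕ) = 2 ^ n - 1 - r := by rw [Fin.val_rev]; omega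
  simp only [E0, entanglerRow, if_neg (not_lt.2 hr), Pi.smul_apply, Pi.star_apply, hrev,
    smul_eq_mul]
  split_ifs <;> simp only [mul_zero, mul_one, mul_neg, neg_mul, star_zero, star_mul', star_inv₀,
    RCLike.star_def, conj_ofReal, conj_I] <;> ring

lemma rev_lt_half_iff {n : ℕ} (hn : 1 ≤ n) (r : Fin (2 ^ n)) :
    (r.rev : ℕ) < 2 ^ n / 2 ↔ 2 ^ n / 2 ≤ (r : ℕ) := by
  have := Nat.mul_div_cancel' (dvd_pow_self 2 (by omega : n ≠ 0))
  rw [Fin.val_rev]; omega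

lemma Smat_mul_E0 {n : ℕ} (hn : 1 ≤ n) (hev : Even n) : Smat n * E0 n = (E0 n)ᴴᵀ := by
  ext r c
  rw [Smat_mul_apply, transpose_apply, conjTranspose_apply]
  rcases lt_or_ge (r : ℕ) (2 ^ n / 2) with hr | hr
  · have hr' : 2 ^ n / 2 ≤ (r.rev : ℕ) :=
      not_lt.1 fun h => (not_le.2 hr) ((rev_lt_half_iff hn r).1 h)
    rw [E0_row_of_lt hr, E0_row_of_le hr', Fin.rev_rev, Pi.smul_apply, smul_eq_mul, ← mul_assoc,
      neg_one_pow_popCnt_rev_mul hev, one_mul, Pi.star_apply]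
  · rw [E0_row_of_lt ((rev_lt_half_iff hn r).2 hr), E0_row_of_le hr]
    simp

theorem concurrence_spectrum_general (n : ℕ) (hn : 1 ≤ n) (hev : Even n)
    (k₁ k₂ : Matrix (Fin (2 ^ n)) (Fin (2 ^ n)) ℂ)
    (hk₁ : k₁ ∈ Matrix.unitaryGroup (Fin (2 ^ n)) ℂ) (hk₁det : k₁.det = 1)
    (hk₁S : k₁ᵀ * Smat n * k₁ = Smat n)
    (hk₂S : k₂ᵀ * Smat n * k₂ = Smat n)
    (d : Fin (2 ^ n) → ℂ) :
    ∃ O : Matrix (Fin (2 ^ n)) (Fin (2 ^ n)) ℂ,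
      (∀ i j, (O i j).im = 0) ∧ Oᵀ * O = 1 ∧ O.det = 1 ∧
      (let v := k₁ * (E0 n * Matrix.diagonal d * (E0 n)ᴴ) * k₂;
        ((E0 n)ᴴ * v * E0 n) * ((E0 n)ᴴ * v * E0 n)ᵀ =
          O * Matrix.diagonal (fun j => (d j) ^ 2) * Oᵀ) := by
  set E := E0 n
  have hEu : E ∈ unitaryGroup (Fin (2 ^ n)) ℂ :=
    mem_unitaryGroup_iff.2 (E0_mul_conjTranspose hn)
  have hE : Eᴴ * E = 1 := mem_unitaryGroup_iff'.1 hEu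
  set O₁ := Eᴴ * k₁ * E
  set O₂ := Eᴴ * k₂ * E
  have hSE := Smat_mul_E0 hn hev
  have hO₁ : O₁ᵀ * O₁ = 1 := transpose_mul_self_conjTranspose_mul_mul_eq_one hE hSE hk₁S
  have hO₂ : O₂ * O₂ᵀ = 1 :=
    mul_eq_one_comm.1 (transpose_mul_self_conjTranspose_mul_mul_eq_one hE hSE hk₂S)
  refine ⟨O₁, im_eq_zero_of_mem_unitaryGroup_of_transpose_mul_self
    (mul_mem (mul_mem (Unitary.star_mem hEu) hk₁) hEu) hO₁, hO₁, ?_, ?_⟩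
  · rw [det_mul, det_mul, hk₁det, mul_one, ← det_mul, hE, det_one]
  · have hv : Eᴴ * (k₁ * (E * diagonal d * Eᴴ) * k₂) * E = O₁ * diagonal d * O₂ := by
      simp only [O₁, O₂, Matrix.mul_assoc]
    simp only [hv]
    rw [mul_mul_transpose_of_mul_transpose_eq_one _ hO₂, transpose_mul, diagonal_transpose,
      Matrix.mul_assoc, ← Matrix.mul_assoc (diagonal d), diagonal_mul_diagonal,
      ← Matrix.mul_assoc]
    simp only [sq]

/-- **Concurrence spectrum of `v = k₁ a k₂`** (for `n` even): with `a = E₀ d E₀†` and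
`k₁, k₂ ∈ SU(N)` preserving the concurrence form, the matrix `(E₀† v E₀)(E₀† v E₀)ᵀ`
is conjugate to `d²` by a real special orthogonal matrix; in particular its multiset of
eigenvalues, the concurrence spectrum of `v`, is `{dⱼ²}`. -/
theorem concurrence_spectrum (n : ℕ) (hn : 1 ≤ n) (hev : Even n)
    (k₁ k₂ : Matrix (Fin (2 ^ n)) (Fin (2 ^ n)) ℂ)
    (hk₁ : k₁ ∈ Matrix.unitaryGroup (Fin (2 ^ n)) ℂ) (hk₁det : k₁.det = 1)
    (hk₂ : k₂ ∈ Matrix.unitaryGroup (Fin (2 ^ n)) ℂ) (hk₂det : k₂.det = 1)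
    (hk₁S : k₁ᵀ * Smat n * k₁ = Smat n)
    (hk₂S : k₂ᵀ * Smat n * k₂ = Smat n)
    (d : Fin (2 ^ n) → ℂ) (hd : ∀ j, ‖d j‖ = 1) :
    ∃ O : Matrix (Fin (2 ^ n)) (Fin (2 ^ n)) ℂ,
      (∀ i j, (O i j).im = 0) ∧ Oᵀ * O = 1 ∧ O.det = 1 ∧
      (let v := k₁ * (E0 n * Matrix.diagonal d * (E0 n)ᴴ) * k₂;
        ((E0 n)ᴴ * v * E0 n) * ((E0 n)ᴴ * v * E0 n)ᵀ =
          O * Matrix.diagonal (fun j => (d j) ^ 2) * Oᵀ) :=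
  concurrence_spectrum_general n hn hev k₁ k₂ hk₁ hk₁det hk₁S hk₂S d
end
end

section
/- Takagi-type diagonalization of symmetric unitaries: let N ≥ 1 and let p be an N×N complex unitary matrix with pᵀ = p and det p = 1. Then there exist a real special orthogonal matrix O ∈ SO(N) and a diagonal unitary matrix d with det d = 1 such that p = O d Oᵀ. -/
/-!
Write `p = A + iB` with `A`, `B` real. Since `p` is symmetric, so are `A` and `B`, and `p̄ = p*`;
then `p* p = p p*` is equivalent to `AB = BA`. Commuting real symmetric matrices are
diagonalized by one real orthogonal matrix, which can be moved into `SO(N)` by flipping the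
sign of a column. This gives `p = O (D_A + i D_B) Oᵀ`, and `d = Oᵀ p O` is unitary with
`det d = det p`.
-/

open Matrix Complex

open Module Module.End in
theorem LinearMap.IsSymmetric.exists_orthonormalBasis_eigenvectors_of_commute
    {𝕜 E ι : Type*} [RCLike 𝕜] [NormedAddCommGroup E] [InnerProductSpace 𝕜 E]
    [FiniteDimensional 𝕜 E] [Fintype ι] {A B : E →ₗ[𝕜] E} (hA : A.IsSymmetric)
    (hB : B.IsSymmetric) (hAB : Commute A B) (hι : finrank 𝕜 E = Fintype.card ι) :
    ∃ (b : OrthonormalBasis ι 𝕜 E) (μ ν : ι → 𝕜),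
      ∀ i, A (b i) = μ i • b i ∧ B (b i) = ν i • b i := by
  classical
  set V : 𝕜 × 𝕜 → Submodule 𝕜 E := fun c => eigenspace A c.2 ⊓ eigenspace B c.1
  have hV : DirectSum.IsInternal V := hA.directSum_isInternal_of_commute hB hAB
  -- only finitely many joint eigenspaces are nonzero
  let _ : Fintype {c // V c ≠ ⊥} := hV.submodule_iSupIndep.fintypeNeBotOfFiniteDimensional
  have hV' : DirectSum.IsInternal fun c : {c // V c ≠ ⊥} => V c :=
    DirectSum.isInternal_ne_bot_iff.mpr hV
  have hOrth : OrthogonalFamily 𝕜 (fun c : {c // V c ≠ ⊥} => V c) fun c => (V c).subtypeₗᵢ :=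
    (hA.orthogonalFamily_eigenspace_inf_eigenspace hB).comp Subtype.coe_injective
  let e := Fintype.equivFin ι
  let c i := hV'.subordinateOrthonormalBasisIndex hι (e i) hOrth
  refine ⟨(hV'.subordinateOrthonormalBasis hι hOrth).reindex e.symm, fun i => (c i).1.2,
    fun i => (c i).1.1, fun i => ?_⟩
  have hmem := hV'.subordinateOrthonormalBasis_subordinate hι (e i) hOrth
  simp only [OrthonormalBasis.reindex_apply, Equiv.symm_symm]
  exact ⟨mem_eigenspace_iff.mp hmem.1, mem_eigenspace_iff.mp hmem.2⟩

theorem Matrix.mul_eq_mul_diagonal_of_mulVec_col {R n : Type*} [CommSemiring R] [Fintype n]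
    [DecidableEq n] {M U : Matrix n n R} {w : n → R}
    (h : ∀ j, M *ᵥ U.col j = w j • U.col j) :
    M * U = U * diagonal w := by
  ext i j
  rw [mul_diagonal, mul_comm]
  exact congrFun (h j) i

theorem Matrix.IsHermitian.exists_unitary_diagonal_of_commute {𝕜 n : Type*} [RCLike 𝕜]
    [Fintype n] [DecidableEq n] {A B : Matrix n n 𝕜} (hA : A.IsHermitian) (hB : B.IsHermitian)
    (hAB : Commute A B) :
    ∃ U ∈ unitaryGroup n 𝕜, ∃ μ ν : n → 𝕜,
      A = U * diagonal μ * star U ∧ B = U * diagonal ν * star U := by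
  obtain ⟨b, μ, ν, hb⟩ :=
    (isSymmetric_toEuclideanLin_iff.mpr hA).exists_orthonormalBasis_eigenvectors_of_commute
      (isSymmetric_toEuclideanLin_iff.mpr hB) (hAB.map (toLpLinAlgEquiv 2))
      finrank_euclideanSpace
  set U := (EuclideanSpace.basisFun n 𝕜).toBasis.toMatrix b.toBasis
  have hU : U ∈ unitaryGroup n 𝕜 :=
    (EuclideanSpace.basisFun n 𝕜).toMatrix_orthonormalBasis_mem_unitary b
  have hconj : ∀ (M : Matrix n n 𝕜) (w : n → 𝕜),
      (∀ j, toEuclideanLin M (b j) = w j • b j) → M = U * diagonal w * star U := by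
    intro M w h
    have hMU : M * U = U * diagonal w :=
      mul_eq_mul_diagonal_of_mulVec_col fun j => congrArg WithLp.ofLp (h j)
    rw [← hMU, Matrix.mul_assoc, mem_unitaryGroup_iff.mp hU, Matrix.mul_one]
  exact ⟨U, hU, μ, ν, hconj A μ fun j => (hb j).1, hconj B ν fun j => (hb j).2⟩

theorem Matrix.exists_mem_specialUnitaryGroup_conj_diagonal_eq {n : Type*} [Fintype n]
    [DecidableEq n] {U : Matrix n n ℝ} (hU : U ∈ unitaryGroup n ℝ) :
    ∃ V ∈ specialUnitaryGroup n ℝ,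
      ∀ d : n → ℝ, V * diagonal d * star V = U * diagonal d * star U := by
  have hdet : U.det * U.det = 1 := by simpa using (det_of_mem_unitary hU).1
  rcases mul_self_eq_one_iff.mp hdet with hdet | hdet
  · exact ⟨U, ⟨hU, hdet⟩, fun _ => rfl⟩
  obtain ⟨i⟩ : Nonempty n := by
    by_contra hn
    have : IsEmpty n := not_nonempty_iff.mp hn
    norm_num [det_isEmpty] at hdet
  -- flipping one column changes the sign of the determinant but not the conjugates
  set s : n → ℝ := Function.update 1 i (-1)
  have hss : ∀ j, s j * s j = 1 := by
    intro j
    by_cases hj : j = i <;> simp [s, hj]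
  have hS : star (diagonal s) = diagonal s := by
    rw [star_eq_conjTranspose, diagonal_conjTranspose, star_trivial]
  have hSS : diagonal s * diagonal s = 1 := by simp only [diagonal_mul_diagonal, hss, diagonal_one]
  refine ⟨U * diagonal s, ⟨mul_mem hU (by rw [mem_unitaryGroup_iff, hS, hSS]), ?_⟩, fun d => ?_⟩
  · simp [det_mul, hdet, s, Finset.prod_update_of_mem]
  · calc U * diagonal s * diagonal d * star (U * diagonal s)
        = U * (diagonal s * diagonal d * diagonal s) * star U := by
          rw [star_mul, hS]
          simp only [Matrix.mul_assoc]
      _ = U * diagonal d * star U := by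
          simp only [diagonal_mul_diagonal, mul_right_comm _ (d _), hss, one_mul]

theorem Matrix.map_re_add_I_smul_map_im {m n : Type*} (p : Matrix m n ℂ) :
    (p.map re).map ofRealHom + I • (p.map im).map ofRealHom = p := by
  ext i j
  simp [mul_comm I]

theorem Matrix.commute_map_conj_of_transpose_eq {n : Type*} [Fintype n] [DecidableEq n]
    {p : Matrix n n ℂ} (hp : p ∈ unitaryGroup n ℂ) (hsym : pᵀ = p) :
    Commute p (p.map (starRingEnd ℂ)) := by
  have hstar : star p = p.map (starRingEnd ℂ) := by
    rw [star_eq_conjTranspose, conjTranspose, hsym]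
    rfl
  rw [← hstar]
  exact hp.2.trans hp.1.symm

theorem Matrix.commute_map_re_map_im {n : Type*} [Fintype n] {p : Matrix n n ℂ}
    (h : Commute p (p.map (starRingEnd ℂ))) : Commute (p.map re) (p.map im) := by
  set a := (p.map re).map ofRealHom
  set b := (p.map im).map ofRealHom
  have hp : p = a + I • b := (map_re_add_I_smul_map_im p).symm
  have hp' : p.map (starRingEnd ℂ) = a - I • b := by
    ext i j
    apply Complex.ext <;> simp [a, b]
  have hab : (2 * I) • (b * a - a * b) = 0 := by
    rw [← sub_eq_zero.mpr h.eq, hp', hp]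
    simp only [add_mul, mul_add, sub_mul, mul_sub, smul_mul_assoc, mul_smul_comm]
    module
  have hab' : Commute a b :=
    (sub_eq_zero.mp ((smul_eq_zero.mp hab).resolve_left (by simp))).symm
  refine map_injective (f := ofRealHom) ofReal_injective ?_
  dsimp only
  rw [Matrix.map_mul, Matrix.map_mul]
  exact hab'.eq

theorem Matrix.star_map_ofReal {n : Type*} (O : Matrix n n ℝ) :
    star (O.map ofRealHom) = (O.map ofRealHom)ᵀ := by
  ext i j
  simp

theorem Matrix.map_ofReal_mul_diagonal_mul_star {n : Type*} [Fintype n] [DecidableEq n]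
    (O : Matrix n n ℝ) (μ : n → ℝ) :
    (O * diagonal μ * star O).map ofRealHom =
      O.map ofRealHom * diagonal (fun i => (μ i : ℂ)) * (O.map ofRealHom)ᵀ := by
  rw [Matrix.map_mul, Matrix.map_mul, diagonal_map (map_zero _), star_eq_conjTranspose,
    conjTranspose_eq_transpose_of_trivial, transpose_map]
  rfl

theorem Matrix.map_ofReal_mem_specialUnitaryGroup {n : Type*} [Fintype n] [DecidableEq n]
    {O : Matrix n n ℝ} (hO : O ∈ specialUnitaryGroup n ℝ) :
    O.map ofRealHom ∈ specialUnitaryGroup n ℂ := by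
  obtain ⟨hU, hdet⟩ := mem_specialUnitaryGroup_iff.mp hO
  refine mem_specialUnitaryGroup_iff.mpr ⟨mem_unitaryGroup_iff.mpr ?_, ?_⟩
  · rw [star_map_ofReal, ← transpose_map, ← Matrix.map_mul,
      ← conjTranspose_eq_transpose_of_trivial, ← star_eq_conjTranspose,
      mem_unitaryGroup_iff.mp hU, Matrix.map_one _ (map_zero _) (map_one _)]
  · rw [← RingHom.mapMatrix_apply, ← RingHom.map_det, hdet, map_one]

theorem symmetric_unitary_diagonalization_general (N : ℕ)
    (p : Matrix (Fin N) (Fin N) ℂ)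
    (hp : p ∈ Matrix.unitaryGroup (Fin N) ℂ) (hsym : pᵀ = p) (hdet : p.det = 1) :
    ∃ O d : Matrix (Fin N) (Fin N) ℂ,
      (∀ i j, (O i j).im = 0) ∧ Oᵀ * O = 1 ∧ O.det = 1 ∧
      d.IsDiag ∧ d ∈ Matrix.unitaryGroup (Fin N) ℂ ∧ d.det = 1 ∧
      p = O * d * Oᵀ := by
  have hherm : ∀ f : ℂ → ℝ, (p.map f).IsHermitian := fun f => by
    rw [IsHermitian, conjTranspose_eq_transpose_of_trivial, ← transpose_map, hsym]
  obtain ⟨U, hU, μ, ν, hre, him⟩ :=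
    (hherm re).exists_unitary_diagonal_of_commute (hherm im)
      (commute_map_re_map_im (commute_map_conj_of_transpose_eq hp hsym))
  obtain ⟨O, hO, hOU⟩ := exists_mem_specialUnitaryGroup_conj_diagonal_eq hU
  set Oc := O.map ofRealHom
  obtain ⟨hOcU, hOcdet⟩ := mem_specialUnitaryGroup_iff.mp (map_ofReal_mem_specialUnitaryGroup hO)
  have hOcT : Ocᵀ * Oc = 1 := by rw [← star_map_ofReal]; exact mem_unitaryGroup_iff'.mp hOcU
  set d := diagonal (fun i => (μ i : ℂ)) + I • diagonal (fun i => (ν i : ℂ))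
  have hpd : p = Oc * d * Ocᵀ := by
    rw [← map_re_add_I_smul_map_im p, hre, him, ← hOU, ← hOU, map_ofReal_mul_diagonal_mul_star,
      map_ofReal_mul_diagonal_mul_star, Matrix.mul_add, Matrix.add_mul, Matrix.mul_smul,
      Matrix.smul_mul]
  have hd : d = star Oc * p * Oc := by
    rw [hpd, star_map_ofReal]
    simp only [Matrix.mul_assoc]
    rw [hOcT, Matrix.mul_one, ← Matrix.mul_assoc, hOcT, Matrix.one_mul]
  refine ⟨Oc, d, fun i j => ofReal_im _, hOcT, hOcdet,
    (isDiag_diagonal _).add ((isDiag_diagonal _).smul I),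
    hd ▸ mul_mem (mul_mem (Unitary.star_mem hOcU) hp) hOcU, ?_, hpd⟩
  rwa [hpd, det_mul, det_mul, det_transpose, hOcdet, one_mul, mul_one] at hdet

/-- **Takagi-type diagonalization of symmetric unitaries:** every symmetric unitary
`p ∈ SU(N)` can be written `p = O d Oᵀ` with `O` real special orthogonal and `d` a
diagonal unitary of determinant one. -/
theorem symmetric_unitary_diagonalization (N : ℕ) (hN : 1 ≤ N)
    (p : Matrix (Fin N) (Fin N) ℂ)
    (hp : p ∈ Matrix.unitaryGroup (Fin N) ℂ) (hsym : pᵀ = p) (hdet : p.det = 1) :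
    ∃ O d : Matrix (Fin N) (Fin N) ℂ,
      (∀ i j, (O i j).im = 0) ∧ Oᵀ * O = 1 ∧ O.det = 1 ∧
      d.IsDiag ∧ d ∈ Matrix.unitaryGroup (Fin N) ℂ ∧ d.det = 1 ∧
      p = O * d * Oᵀ :=
  symmetric_unitary_diagonalization_general N p hp hsym hdet
end

section
/- Let N ≥ 3 and let v, w ∈ ℂ^N be unit vectors (‖v‖ = ‖w‖ = 1, Hermitian norm) with vᵀ v = wᵀ w, where vᵀ v = Σ_j v_j² is the bilinear dot product without complex conjugation. Then there exists a real special orthogonal matrix O ∈ SO(N) such that O v = w. In other words, SO(N) acts transitively on the intersection of the unit sphere of ℂ^N with each level set of the quadratic form v ↦ vᵀ v. -/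
open Matrix Complex

/-!
Write `v = a + i b` and `w = c + i d` with `a, b, c, d ∈ ℝ^N`. Then `‖v‖² = |a|² + |b|²` and
`vᵀv = |a|² - |b|² + 2i⟨a, b⟩`, so the hypotheses say exactly that the pairs `(a, b)` and `(c, d)`
have the same Gram matrix. Equal Gram matrices give a linear isometry of `ℝ^N` sending `a ↦ c`,
`b ↦ d`; if its determinant is `-1`, compose it with the reflection in a hyperplane containing
`c` and `d`, which exists because `N ≥ 3`. The resulting real matrix maps `v` to `w`, acting
separately on real and imaginary parts.
-/

section
variable {𝕜 E : Type*} [RCLike 𝕜] [NormedAddCommGroup E] [InnerProductSpace 𝕜 E]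
  {ι : Type*} [Fintype ι]

theorem inner_linearCombination_eq_of_gram_eq {x y : ι → E} (h : gram 𝕜 x = gram 𝕜 y)
    (c d : ι → 𝕜) :
    inner 𝕜 (Fintype.linearCombination 𝕜 x c) (Fintype.linearCombination 𝕜 x d) =
      inner 𝕜 (Fintype.linearCombination 𝕜 y c) (Fintype.linearCombination 𝕜 y d) := by
  simp only [Fintype.linearCombination_apply, ← star_dotProduct_gram_mulVec, h]

theorem exists_linearIsometryEquiv_of_gram_eq [FiniteDimensional 𝕜 E] {x y : ι → E}
    (h : gram 𝕜 x = gram 𝕜 y) : ∃ Φ : E ≃ₗᵢ[𝕜] E, ∀ i, Φ (x i) = y i := by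
  classical
  set f := Fintype.linearCombination 𝕜 x
  set g := Fintype.linearCombination 𝕜 y
  have hnorm (c : ι → 𝕜) : ‖f c‖ = ‖g c‖ := by
    rw [norm_eq_sqrt_re_inner (𝕜 := 𝕜), norm_eq_sqrt_re_inner (𝕜 := 𝕜),
      inner_linearCombination_eq_of_gram_eq h]
  have hker : LinearMap.ker f ≤ LinearMap.ker g := fun c hc ↦ by
    rw [LinearMap.mem_ker, ← norm_eq_zero, ← hnorm, norm_eq_zero, ← LinearMap.mem_ker]
    exact hc
  let L : LinearMap.range f →ₗ[𝕜] E :=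
    (LinearMap.ker f).liftQ g hker ∘ₗ f.quotKerEquivRange.symm.toLinearMap
  have hL (c : ι → 𝕜) : L ⟨f c, f.mem_range_self c⟩ = g c := by
    simp [L]
  let Ψ : LinearMap.range f →ₗᵢ[𝕜] E :=
    ⟨L, by rintro ⟨-, c, rfl⟩; exact (congrArg norm (hL c)).trans (hnorm c).symm⟩
  refine ⟨Ψ.extend.toLinearIsometryEquiv rfl, fun i ↦ ?_⟩
  have hf : f (Pi.single i 1) = x i := by simp [f, Fintype.linearCombination_apply_single]
  have hg : g (Pi.single i 1) = y i := by simp [g, Fintype.linearCombination_apply_single]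
  rw [← hf, ← hg, ← hL]
  exact Ψ.extend_apply ⟨f _, f.mem_range_self _⟩
end

open Module in
theorem exists_linearIsometryEquiv_det_eq_neg_one_of_finrank_lt
    {𝕜 E : Type*} [RCLike 𝕜] [NormedAddCommGroup E] [InnerProductSpace 𝕜 E]
    [FiniteDimensional 𝕜 E] {S : Submodule 𝕜 E} (hS : finrank 𝕜 S < finrank 𝕜 E) :
    ∃ R : E ≃ₗᵢ[𝕜] E, LinearMap.det R.toLinearMap = -1 ∧ ∀ s ∈ S, R s = s := by
  obtain ⟨u, hu, hu0⟩ : ∃ u ∈ Sᗮ, u ≠ 0 := by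
    refine Submodule.exists_mem_ne_zero_of_ne_bot fun h ↦ hS.ne ?_
    rw [← S.finrank_add_finrank_orthogonal, h, finrank_bot, add_zero]
  set K := (𝕜 ∙ u)ᗮ
  have hKperp : Kᗮ = 𝕜 ∙ u := Submodule.orthogonal_orthogonal _
  refine ⟨K.reflection, ?_, fun s hs ↦ K.reflection_mem_subspace_eq_self ?_⟩
  · rw [Submodule.det_reflection, hKperp, finrank_span_singleton hu0, pow_one]
  · exact Submodule.orthogonal_le ((Submodule.span_singleton_le_iff_mem _ _).mpr hu)
      (S.le_orthogonal_orthogonal hs)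

theorem Matrix.map_mem_specialOrthogonalGroup {n R S : Type*} [Fintype n] [DecidableEq n]
    [CommRing R] [CommRing S] (f : R →+* S) {M : Matrix n n R}
    (hM : M ∈ specialOrthogonalGroup n R) : M.map f ∈ specialOrthogonalGroup n S := by
  rw [mem_specialOrthogonalGroup_iff, mem_orthogonalGroup_iff'] at hM ⊢
  refine ⟨?_, ?_⟩
  · rw [← transpose_map, ← Matrix.map_mul, hM.1, Matrix.map_one f f.map_zero f.map_one]
  · rw [show M.map f = f.mapMatrix M from rfl, ← RingHom.map_det, hM.2, f.map_one]

theorem LinearIsometryEquiv.exists_mem_specialOrthogonalGroup {n : Type*} [Fintype n]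
    [DecidableEq n] (Φ : EuclideanSpace ℝ n ≃ₗᵢ[ℝ] EuclideanSpace ℝ n)
    (hΦ : LinearMap.det Φ.toLinearMap = 1) :
    ∃ M ∈ specialOrthogonalGroup n ℝ, ∀ x, M *ᵥ x = (Φ (WithLp.toLp 2 x)).ofLp := by
  set b := EuclideanSpace.basisFun n ℝ
  refine ⟨Φ.toMatrix b.toBasis b.toBasis,
    mem_specialOrthogonalGroup_iff.mpr ⟨Φ.toMatrix_mem_unitaryGroup b b, ?_⟩, fun x ↦ ?_⟩
  · exact (LinearMap.det_toMatrix _ _).trans hΦ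
  · exact LinearMap.toMatrix_mulVec_repr b.toBasis b.toBasis Φ.toLinearMap (WithLp.toLp 2 x)

theorem exists_linearIsometryEquiv_det_eq_one_of_gram_eq {F ι : Type*} [NormedAddCommGroup F]
    [InnerProductSpace ℝ F] [FiniteDimensional ℝ F] [Fintype ι] {x y : ι → F}
    (hι : Fintype.card ι < Module.finrank ℝ F) (h : gram ℝ x = gram ℝ y) :
    ∃ Φ : F ≃ₗᵢ[ℝ] F, LinearMap.det Φ.toLinearMap = 1 ∧ ∀ i, Φ (x i) = y i := by
  obtain ⟨Φ, hΦ⟩ := exists_linearIsometryEquiv_of_gram_eq h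
  have hdet : |LinearMap.det Φ.toLinearMap| = 1 :=
    (LinearMap.normDet_eq_abs_det _).symm.trans Φ.toLinearIsometry.normDet_eq_one
  rcases (abs_eq zero_le_one).mp hdet with hdet | hdet
  · exact ⟨Φ, hdet, hΦ⟩
  obtain ⟨R, hRdet, hR⟩ := exists_linearIsometryEquiv_det_eq_neg_one_of_finrank_lt
    ((finrank_range_le_card y).trans_lt hι)
  refine ⟨Φ.trans R, ?_, fun i ↦ ?_⟩
  · rw [show (Φ.trans R).toLinearMap = R.toLinearMap ∘ₗ Φ.toLinearMap from rfl,
      LinearMap.det_comp, hRdet, hdet]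
    norm_num
  · rw [LinearIsometryEquiv.trans_apply, hΦ, hR _ (Submodule.subset_span ⟨i, rfl⟩)]

theorem exists_mem_specialOrthogonalGroup_mulVec_eq {n ι : Type*} [Fintype n] [DecidableEq n]
    [Fintype ι] {x y : ι → n → ℝ} (hι : Fintype.card ι < Fintype.card n)
    (h : ∀ i j, x i ⬝ᵥ x j = y i ⬝ᵥ y j) :
    ∃ M ∈ specialOrthogonalGroup n ℝ, ∀ i, M *ᵥ x i = y i := by
  have hgram : gram ℝ (WithLp.toLp 2 ∘ x) = gram ℝ (WithLp.toLp 2 ∘ y) := by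
    ext i j
    simpa [gram_apply, EuclideanSpace.inner_eq_star_dotProduct, dotProduct_comm] using h i j
  obtain ⟨Φ, hdet, hΦ⟩ := exists_linearIsometryEquiv_det_eq_one_of_gram_eq
    (by rwa [finrank_euclideanSpace]) hgram
  obtain ⟨M, hM, hMΦ⟩ := Φ.exists_mem_specialOrthogonalGroup hdet
  exact ⟨M, hM, fun i ↦ by rw [hMΦ]; exact congrArg WithLp.ofLp (hΦ i)⟩

section
variable {n : Type*} [Fintype n]

theorem Complex.re_star_dotProduct_self (v : n → ℂ) :
    (star v ⬝ᵥ v).re = (re ∘ v) ⬝ᵥ (re ∘ v) + (im ∘ v) ⬝ᵥ (im ∘ v) := by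
  simp [dotProduct, re_sum, Finset.sum_add_distrib]

theorem Complex.re_dotProduct_self (v : n → ℂ) :
    (v ⬝ᵥ v).re = (re ∘ v) ⬝ᵥ (re ∘ v) - (im ∘ v) ⬝ᵥ (im ∘ v) := by
  simp [dotProduct, re_sum, Finset.sum_sub_distrib]

theorem Complex.im_dotProduct_self (v : n → ℂ) :
    (v ⬝ᵥ v).im = 2 * ((re ∘ v) ⬝ᵥ (im ∘ v)) := by
  simp only [dotProduct, im_sum, mul_im, Finset.mul_sum, Function.comp_apply]
  exact Finset.sum_congr rfl fun _ _ ↦ by ring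

theorem Complex.dotProduct_reIm_eq_of_dotProduct_self_eq {v w : n → ℂ}
    (hstar : star v ⬝ᵥ v = star w ⬝ᵥ w) (hQ : v ⬝ᵥ v = w ⬝ᵥ w) (i j : Fin 2) :
    ![re ∘ v, im ∘ v] i ⬝ᵥ ![re ∘ v, im ∘ v] j = ![re ∘ w, im ∘ w] i ⬝ᵥ ![re ∘ w, im ∘ w] j := by
  have h₁ := congrArg re hstar
  have h₂ := congrArg re hQ
  have h₃ := congrArg im hQ
  rw [re_star_dotProduct_self, re_star_dotProduct_self] at h₁
  rw [re_dotProduct_self, re_dotProduct_self] at h₂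
  rw [im_dotProduct_self, im_dotProduct_self] at h₃
  have hre : (re ∘ v) ⬝ᵥ (re ∘ v) = (re ∘ w) ⬝ᵥ (re ∘ w) := by linarith
  have him : (im ∘ v) ⬝ᵥ (im ∘ v) = (im ∘ w) ⬝ᵥ (im ∘ w) := by linarith
  have hreim : (re ∘ v) ⬝ᵥ (im ∘ v) = (re ∘ w) ⬝ᵥ (im ∘ w) := by linarith
  fin_cases i <;> fin_cases j
  · exact hre
  · exact hreim
  · exact (dotProduct_comm _ _).trans (hreim.trans (dotProduct_comm _ _))
  · exact him

theorem Matrix.map_ofReal_mulVec {m : Type*} (M : Matrix m n ℝ) (v : n → ℂ) :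
    M.map ofReal *ᵥ v = fun i ↦ ⟨(M *ᵥ (re ∘ v)) i, (M *ᵥ (im ∘ v)) i⟩ := by
  funext i
  apply Complex.ext <;> simp [mulVec, dotProduct, re_sum, im_sum]
end

/-- **`SO(N)` acts transitively on the unit-sphere level sets of `v ↦ vᵀv`:** for
`N ≥ 3` and unit vectors `v, w ∈ ℂ^N` with `vᵀv = wᵀw`, there is a real special
orthogonal matrix `O` with `O v = w`. -/
theorem SO_transitive_on_level_sets (N : ℕ) (hN : 3 ≤ N)
    (v w : Fin N → ℂ)
    (hv : star v ⬝ᵥ v = 1) (hw : star w ⬝ᵥ w = 1)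
    (hQ : v ⬝ᵥ v = w ⬝ᵥ w) :
    ∃ O : Matrix (Fin N) (Fin N) ℂ,
      (∀ i j, (O i j).im = 0) ∧ Oᵀ * O = 1 ∧ O.det = 1 ∧ O *ᵥ v = w := by
  obtain ⟨M, hM, hMv⟩ := exists_mem_specialOrthogonalGroup_mulVec_eq
    (by simp only [Fintype.card_fin]; omega)
    (dotProduct_reIm_eq_of_dotProduct_self_eq (hv.trans hw.symm) hQ)
  obtain ⟨hO, hdet⟩ :=
    mem_specialOrthogonalGroup_iff.mp (map_mem_specialOrthogonalGroup ofRealHom hM)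
  refine ⟨M.map ofReal, fun _ _ ↦ ofReal_im _, (mem_orthogonalGroup_iff' _ _).mp hO, hdet, ?_⟩
  have hre : M *ᵥ (re ∘ v) = re ∘ w := hMv 0
  have him : M *ᵥ (im ∘ v) = im ∘ w := hMv 1
  rw [map_ofReal_mulVec, hre, him]
  rfl
end
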